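/- Assume M is invertible and let ξ ∈ ℂ be such that Q(ξ) has n pairwise distinct eigenvalues σ₁,…,σₙ with eigenvectors x₁,…,xₙ, and such that for every i, writing Q'(ξ)x_i = Σ_ℓ α_{iℓ} x_ℓ in the basis x₁,…,xₙ, the diagonal coefficient α_{ii} is nonzero. Then the 2n²×2n² block matrix A(ξ) = [[I⊗Q(ξ) − Q(ξ)⊗I, 0],[I⊗Q'(ξ), I⊗Q(ξ) − Q(ξ)⊗I]] has rank 2n² − n. -/

import Mathlib

/-!
Let `X` be the matrix whose columns are the eigenvectors `xᵢ`, so `Q(ξ) X = X diag(σ)` and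
`Q'(ξ) X = X C` where `C` has entries `C ℓ i = α_{iℓ}`. Conjugating `A(ξ)` by
`diag(X ⊗ X, X ⊗ X)` gives `[[Δ, 0], [I ⊗ C, Δ]]` with `Δ` diagonal, `Δ (i, j) = σⱼ - σᵢ`.
Since the `σᵢ` are distinct, `Δ` vanishes exactly on the pairs `(i, i)`; a kernel vector `(u, v)`
therefore has `u` supported on them, the second block row gives `α_{ii} u (i, i) = 0`, so `u = 0`,
and then `v` is any vector supported on the pairs `(i, i)`. The kernel has dimension `n`.
-/

open Matrix
open scoped Kronecker

namespace ZGV5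

variable {n : ℕ}

/-- `Q(λ) = M⁻¹(L₀ + λL₁ + λ²L₂)`. -/
noncomputable def Q (L2 L1 L0 M : Matrix (Fin n) (Fin n) ℂ) (lam : ℂ) :
    Matrix (Fin n) (Fin n) ℂ :=
  M⁻¹ * (L0 + lam • L1 + lam ^ 2 • L2)

/-- `Q'(λ) = M⁻¹(L₁ + 2λL₂)`. -/
noncomputable def Q' (L2 L1 M : Matrix (Fin n) (Fin n) ℂ) (lam : ℂ) :
    Matrix (Fin n) (Fin n) ℂ :=
  M⁻¹ * (L1 + (2 * lam) • L2)

/-- `A(λ) = [[I⊗Q(λ) − Q(λ)⊗I, 0],[I⊗Q'(λ), I⊗Q(λ) − Q(λ)⊗I]]`. -/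
noncomputable def A (L2 L1 L0 M : Matrix (Fin n) (Fin n) ℂ) (lam : ℂ) :
    Matrix ((Fin n × Fin n) ⊕ (Fin n × Fin n)) ((Fin n × Fin n) ⊕ (Fin n × Fin n)) ℂ :=
  Matrix.fromBlocks
    ((1 : Matrix (Fin n) (Fin n) ℂ) ⊗ₖ Q L2 L1 L0 M lam
        - Q L2 L1 L0 M lam ⊗ₖ (1 : Matrix (Fin n) (Fin n) ℂ))
    0
    ((1 : Matrix (Fin n) (Fin n) ℂ) ⊗ₖ Q' L2 L1 M lam)
    ((1 : Matrix (Fin n) (Fin n) ℂ) ⊗ₖ Q L2 L1 L0 M lam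
        - Q L2 L1 L0 M lam ⊗ₖ (1 : Matrix (Fin n) (Fin n) ℂ))

section SylvesterBlock

variable {R ι : Type*} [CommRing R] [DecidableEq ι]

def kroneckerSylvester (Q : Matrix ι ι R) : Matrix (ι × ι) (ι × ι) R :=
  1 ⊗ₖ Q - Q ⊗ₖ 1

def sylvesterBlock (Q Q' : Matrix ι ι R) :
    Matrix ((ι × ι) ⊕ (ι × ι)) ((ι × ι) ⊕ (ι × ι)) R :=
  fromBlocks (kroneckerSylvester Q) 0 (1 ⊗ₖ Q') (kroneckerSylvester Q)

theorem kroneckerSylvester_diagonal (σ : ι → R) :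
    kroneckerSylvester (diagonal σ) = diagonal fun p => σ p.2 - σ p.1 := by
  rw [kroneckerSylvester, ← diagonal_one, diagonal_kronecker_diagonal,
    diagonal_kronecker_diagonal, diagonal_sub]
  simp

variable [Fintype ι]

theorem kroneckerSylvester_mul_kronecker {Q X D : Matrix ι ι R} (h : Q * X = X * D) :
    kroneckerSylvester Q * (X ⊗ₖ X) = (X ⊗ₖ X) * kroneckerSylvester D := by
  simp only [kroneckerSylvester, Matrix.sub_mul, Matrix.mul_sub, ← mul_kronecker_mul,
    Matrix.one_mul, Matrix.mul_one, h]

theorem rank_sylvesterBlock_of_mul_eq {Q Q' X D C : Matrix ι ι R} (hX : IsUnit X.det)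
    (hQ : Q * X = X * D) (hQ' : Q' * X = X * C) :
    (sylvesterBlock Q Q').rank = (sylvesterBlock D C).rank := by
  set P := fromBlocks (X ⊗ₖ X) 0 0 (X ⊗ₖ X)
  have hP : IsUnit P.det := by
    have : IsUnit (X ⊗ₖ X).det := by rw [det_kronecker]; exact (hX.pow _).mul (hX.pow _)
    simpa [P, det_fromBlocks_zero₁₂] using this.mul this
  have hconj : sylvesterBlock Q Q' * P = P * sylvesterBlock D C := by
    simp only [sylvesterBlock, P, fromBlocks_multiply, Matrix.mul_zero, Matrix.zero_mul,
      add_zero, zero_add, kroneckerSylvester_mul_kronecker hQ, ← mul_kronecker_mul,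
      Matrix.one_mul, Matrix.mul_one, hQ']
  rw [← rank_mul_eq_left_of_isUnit_det P _ hP, hconj, rank_mul_eq_right_of_isUnit_det P _ hP]

theorem one_kronecker_mulVec_apply (C : Matrix ι ι R) (u : ι × ι → R) (i j : ι) :
    ((1 ⊗ₖ C) *ᵥ u) (i, j) = ∑ l, C j l * u (i, l) := by
  simp [mulVec, dotProduct, Fintype.sum_prod_type, one_apply, ite_mul]

section MulVec

variable (σ : ι → R) (C : Matrix ι ι R) (z : (ι × ι) ⊕ (ι × ι) → R)

theorem sylvesterBlock_diagonal_mulVec_inl (p : ι × ι) :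
    (sylvesterBlock (diagonal σ) C *ᵥ z) (Sum.inl p) = (σ p.2 - σ p.1) * z (Sum.inl p) := by
  simp [sylvesterBlock, fromBlocks_mulVec, kroneckerSylvester_diagonal, mulVec_diagonal]

theorem sylvesterBlock_diagonal_mulVec_inr (i j : ι) :
    (sylvesterBlock (diagonal σ) C *ᵥ z) (Sum.inr (i, j)) =
      ∑ l, C j l * z (Sum.inl (i, l)) + (σ j - σ i) * z (Sum.inr (i, j)) := by
  simp [sylvesterBlock, fromBlocks_mulVec, kroneckerSylvester_diagonal, mulVec_diagonal,
    one_kronecker_mulVec_apply]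

end MulVec

end SylvesterBlock

section Kernel

variable {K ι : Type*} [Field K] [DecidableEq ι]

def inrDiagonal : (ι → K) →ₗ[K] ((ι × ι) ⊕ (ι × ι) → K) where
  toFun c := Sum.elim 0 fun p => diagonal c p.1 p.2
  map_add' c c' := by ext (p | p) <;> simp [diagonal_apply, ite_add_ite]
  map_smul' a c := by ext (p | p) <;> simp [diagonal_apply]

theorem inrDiagonal_injective : Function.Injective (inrDiagonal : (ι → K) →ₗ[K] _) := by
  intro c c' h
  ext i
  simpa [inrDiagonal] using congrFun h (Sum.inr (i, i))

variable [Fintype ι] {σ : ι → K} {C : Matrix ι ι K}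

theorem sylvesterBlock_diagonal_mulVec_inrDiagonal (c : ι → K) :
    sylvesterBlock (diagonal σ) C *ᵥ inrDiagonal c = 0 := by
  ext (⟨i, j⟩ | ⟨i, j⟩)
  · simp [sylvesterBlock_diagonal_mulVec_inl, inrDiagonal]
  · rcases eq_or_ne i j with rfl | hij
    · simp [sylvesterBlock_diagonal_mulVec_inr, inrDiagonal]
    · simp [sylvesterBlock_diagonal_mulVec_inr, inrDiagonal, hij]

theorem mem_range_inrDiagonal_of_sylvesterBlock_mulVec_eq_zero (hσ : Function.Injective σ)
    (hC : ∀ i, C i i ≠ 0) {z : (ι × ι) ⊕ (ι × ι) → K}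
    (hz : sylvesterBlock (diagonal σ) C *ᵥ z = 0) : z ∈ LinearMap.range inrDiagonal := by
  have hinl (i j : ι) : (σ j - σ i) * z (Sum.inl (i, j)) = 0 := by
    rw [← sylvesterBlock_diagonal_mulVec_inl σ C z (i, j), hz, Pi.zero_apply]
  have hinr (i j : ι) :
      ∑ l, C j l * z (Sum.inl (i, l)) + (σ j - σ i) * z (Sum.inr (i, j)) = 0 := by
    rw [← sylvesterBlock_diagonal_mulVec_inr σ C z, hz, Pi.zero_apply]
  have hσ' {i j : ι} (hij : i ≠ j) : σ j - σ i ≠ 0 := sub_ne_zero.2 (hσ.ne hij.symm)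
  have hinl_off {i j : ι} (hij : i ≠ j) : z (Sum.inl (i, j)) = 0 :=
    (mul_eq_zero.1 (hinl i j)).resolve_left (hσ' hij)
  have hsum (i j : ι) : ∑ l, C j l * z (Sum.inl (i, l)) = C j i * z (Sum.inl (i, i)) :=
    Finset.sum_eq_single_of_mem i (Finset.mem_univ _) fun l _ hl => by
      rw [hinl_off (Ne.symm hl), mul_zero]
  have hinl_zero (i j : ι) : z (Sum.inl (i, j)) = 0 := by
    rcases eq_or_ne i j with rfl | hij
    · simpa [hsum, hC i] using hinr i i
    · exact hinl_off hij
  have hinr_off {i j : ι} (hij : i ≠ j) : z (Sum.inr (i, j)) = 0 := by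
    simpa [hsum, hinl_zero, hσ' hij] using hinr i j
  refine ⟨fun i => z (Sum.inr (i, i)), ?_⟩
  ext (⟨i, j⟩ | ⟨i, j⟩)
  · simp [inrDiagonal, hinl_zero]
  · rcases eq_or_ne i j with rfl | hij
    · simp [inrDiagonal]
    · simp [inrDiagonal, hij, hinr_off hij]

theorem ker_sylvesterBlock_diagonal (hσ : Function.Injective σ) (hC : ∀ i, C i i ≠ 0) :
    LinearMap.ker (sylvesterBlock (diagonal σ) C).mulVecLin = LinearMap.range inrDiagonal :=
  le_antisymm (fun _ hz => mem_range_inrDiagonal_of_sylvesterBlock_mulVec_eq_zero hσ hC hz)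
    (by rintro _ ⟨c, rfl⟩; exact sylvesterBlock_diagonal_mulVec_inrDiagonal c)

theorem rank_sylvesterBlock_diagonal (hσ : Function.Injective σ) (hC : ∀ i, C i i ≠ 0) :
    (sylvesterBlock (diagonal σ) C).rank = 2 * Fintype.card ι ^ 2 - Fintype.card ι := by
  have h := LinearMap.finrank_range_add_finrank_ker (sylvesterBlock (diagonal σ) C).mulVecLin
  rw [ker_sylvesterBlock_diagonal hσ hC, LinearMap.finrank_range_of_inj inrDiagonal_injective,
    Module.finrank_fintype_fun_eq_card, Module.finrank_fintype_fun_eq_card] at h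
  simp only [Fintype.card_sum, Fintype.card_prod] at h
  rw [rank]
  lia

end Kernel

section Eigenbasis

variable {K ι : Type*} [Field K] [Fintype ι] [DecidableEq ι]

theorem mul_basisFun_toMatrix (b : Module.Basis ι K (ι → K)) (Q : Matrix ι ι K) :
    Q * (Pi.basisFun K ι).toMatrix b =
      (Pi.basisFun K ι).toMatrix b * LinearMap.toMatrix b b (toLin' Q) := by
  rw [basis_toMatrix_mul_linearMap_toMatrix,
    ← linearMap_toMatrix_mul_basis_toMatrix b (Pi.basisFun K ι) (Pi.basisFun K ι),
    LinearMap.toMatrix_eq_toMatrix', LinearMap.toMatrix'_toLin']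

theorem toMatrix_toLin'_eq_diagonal {b : Module.Basis ι K (ι → K)} {Q : Matrix ι ι K}
    {σ : ι → K} (hQ : ∀ i, Q *ᵥ b i = σ i • b i) :
    LinearMap.toMatrix b b (toLin' Q) = diagonal σ := by
  ext i j
  rw [LinearMap.toMatrix_apply, toLin'_apply, hQ, map_smul, b.repr_self, diagonal_apply]
  by_cases h : i = j <;> simp [h]

theorem rank_sylvesterBlock_of_eigenbasis (b : Module.Basis ι K (ι → K)) {Q Q' : Matrix ι ι K}
    {σ : ι → K} (hσ : Function.Injective σ) (hQ : ∀ i, Q *ᵥ b i = σ i • b i)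
    (hQ' : ∀ i, b.repr (Q' *ᵥ b i) i ≠ 0) :
    (sylvesterBlock Q Q').rank = 2 * Fintype.card ι ^ 2 - Fintype.card ι := by
  let := (Pi.basisFun K ι).invertibleToMatrix b
  rw [rank_sylvesterBlock_of_mul_eq (isUnit_det_of_invertible _) (mul_basisFun_toMatrix b Q)
    (mul_basisFun_toMatrix b Q'), toMatrix_toLin'_eq_diagonal hQ]
  refine rank_sylvesterBlock_diagonal hσ fun i => ?_
  simpa [LinearMap.toMatrix_apply] using hQ' i

end Eigenbasis

theorem rank_A_eq_general
    (n : ℕ) (L2 L1 L0 M : Matrix (Fin n) (Fin n) ℂ)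
    (ξ : ℂ)
    (σ : Fin n → ℂ) (x : Fin n → (Fin n → ℂ))
    (hdist : Function.Injective σ)
    (hx : ∀ i, x i ≠ 0)
    (hQ : ∀ i, Q L2 L1 L0 M ξ *ᵥ x i = σ i • x i)
    (hdiag : ∀ (i : Fin n) (α : Fin n → ℂ),
      Q' L2 L1 M ξ *ᵥ x i = ∑ ℓ, α ℓ • x ℓ → α i ≠ 0) :
    (A L2 L1 L0 M ξ).rank = 2 * n ^ 2 - n := by
  have hli : LinearIndependent ℂ x :=
    Module.End.eigenvectors_linearIndependent' (toLin' (Q L2 L1 L0 M ξ)) σ hdist x fun i =>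
      Module.End.hasEigenvector_iff.2 ⟨Module.End.mem_eigenspace_iff.2 (hQ i), hx i⟩
  let b := basisOfLinearIndependentOfCardEqFinrank' x hli (by simp)
  have hb : ⇑b = x := coe_basisOfLinearIndependentOfCardEqFinrank' x hli _
  have hQ' (i : Fin n) : b.repr (Q' L2 L1 M ξ *ᵥ b i) i ≠ 0 := by
    refine hdiag i _ ?_
    simpa [hb] using (b.sum_repr (Q' L2 L1 M ξ *ᵥ x i)).symm
  have h := rank_sylvesterBlock_of_eigenbasis b hdist (by simpa [hb] using hQ) hQ'
  rwa [Fintype.card_fin] at h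

/-- If `Q(ξ)` has `n` pairwise distinct eigenvalues with eigenvectors `x₁,…,xₙ`,
and for each `i` the diagonal coefficient `α_{ii}` of `Q'(ξ)x_i` in the basis
`x₁,…,xₙ` is nonzero, then `rank(A(ξ)) = 2n² − n`. -/
theorem rank_A_eq
    (n : ℕ) (hn : 1 ≤ n) (L2 L1 L0 M : Matrix (Fin n) (Fin n) ℂ)
    (hM : IsUnit M) (ξ : ℂ)
    (σ : Fin n → ℂ) (x : Fin n → (Fin n → ℂ))
    (hdist : Function.Injective σ)
    (hx : ∀ i, x i ≠ 0)
    (hQ : ∀ i, Q L2 L1 L0 M ξ *ᵥ x i = σ i • x i)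
    (hdiag : ∀ (i : Fin n) (α : Fin n → ℂ),
      Q' L2 L1 M ξ *ᵥ x i = ∑ ℓ, α ℓ • x ℓ → α i ≠ 0) :
    (A L2 L1 L0 M ξ).rank = 2 * n ^ 2 - n :=
  rank_A_eq_general n L2 L1 L0 M ξ σ x hdist hx hQ hdiag

end ZGV5
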